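/- arXiv:1710.03287 — 5 statements merged into one kernel-verified Lean document; each statement's English description precedes it below -/
import Mathlib

section
/- For any two vectors u, v in the closed Euclidean unit ball of ℝ^N, ‖u − v‖₂ ≤ 2 ‖ [u,1]/‖[u,1]‖₂ − [v,1]/‖[v,1]‖₂ ‖₂, where [x,1] ∈ ℝ^{N+1} denotes the vector x with the entry 1 appended. -/
open Finset

set_option maxHeartbeats 1000000 in
/-- Key scalar inequality: for `0 ≤ S, T ≤ 1`, `c² ≤ S·T`,
`8(c+1) ≤ (8 - S - T + 2c) · √(S+1) · √(T+1)`. -/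
lemma key_scalar_ineq (S T c : ℝ) (hS0 : 0 ≤ S) (hT0 : 0 ≤ T) (hS1 : S ≤ 1) (hT1 : T ≤ 1)
    (hcs : c ^ 2 ≤ S * T) :
    8 * (c + 1) ≤ (8 - S - T + 2 * c) * (Real.sqrt (S + 1) * Real.sqrt (T + 1)) := by
  set a := Real.sqrt (S + 1) with ha
  set b := Real.sqrt (T + 1) with hb
  have ha2 : a ^ 2 = S + 1 := Real.sq_sqrt (by linarith)
  have hb2 : b ^ 2 = T + 1 := Real.sq_sqrt (by linarith)
  have ha0 : 0 ≤ a := Real.sqrt_nonneg _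
  have hb0 : 0 ≤ b := Real.sqrt_nonneg _
  have hab2 : a * b ≤ 2 := by nlinarith [sq_nonneg (a - b)]
  set r := Real.sqrt (S * T) with hr
  have hr0 : 0 ≤ r := Real.sqrt_nonneg _
  have hr2 : r ^ 2 = S * T := Real.sq_sqrt (mul_nonneg hS0 hT0)
  have hST1 : S * T ≤ 1 := by nlinarith
  have hr1 : r ≤ 1 := by nlinarith
  have hcr : c ≤ r := by nlinarith
  have hstr : 2 * r ≤ S + T := by nlinarith [sq_nonneg (S - T)]
  have hx : (0:ℝ) ≤ 1 - S := by linarith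
  have hy : (0:ℝ) ≤ 1 - T := by linarith
  -- Q ≥ 0
  have hQ : (0:ℝ) ≤ 48 - 2*r - 15*S - 15*T - 14*(S*T) + S^2 + T^2 - 2*(r*S) - 2*(r*T)
      - 2*(r*(S*T)) + S^2*T + S*T^2 := by
    nlinarith [mul_nonneg (sub_nonneg.2 hr1) (mul_nonneg (by linarith : (0:ℝ) ≤ 1 + S) (by linarith : (0:ℝ) ≤ 1 + T)),
      mul_nonneg hx hy, mul_nonneg (mul_nonneg hx hy) hy, mul_nonneg (mul_nonneg hx hy) hx,
      mul_nonneg (mul_nonneg hx hx) hy, mul_nonneg (mul_nonneg hy hy) hx,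
      mul_nonneg hS0 hT0, mul_nonneg hx hT0, mul_nonneg hy hS0]
  have h1 : (0:ℝ) ≤ S + T - 2*r := by linarith
  have heq : ((8 - S - T + 2*r) * (a * b)) ^ 2 - (8 * (1 + r)) ^ 2
      = (S + T - 2*r) * (48 - 2*r - 15*S - 15*T - 14*(S*T) + S^2 + T^2 - 2*(r*S) - 2*(r*T)
        - 2*(r*(S*T)) + S^2*T + S*T^2) := by
    linear_combination ((8 - S - T + 2*r)^2 * b^2) * ha2 + ((8 - S - T + 2*r)^2 * (S+1)) * hb2
      - 64 * hr2
  have hE0 : 0 ≤ (8 - S - T + 2*r) * (a * b) :=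
    mul_nonneg (by linarith) (mul_nonneg ha0 hb0)
  have hsq : (8 * (1 + r)) ^ 2 ≤ ((8 - S - T + 2*r) * (a * b)) ^ 2 := by
    nlinarith [mul_nonneg h1 hQ]
  have h8 : 8 * (1 + r) ≤ (8 - S - T + 2*r) * (a * b) := by
    have h := Real.sqrt_le_sqrt hsq
    rwa [Real.sqrt_sq (by positivity), Real.sqrt_sq hE0] at h
  have hd : 0 ≤ (r - c) * (8 - 2 * (a * b)) :=
    mul_nonneg (by linarith) (by linarith)
  nlinarith [hd, h8]

/-- For `u, v` in the closed Euclidean unit ball of `ℝ^N`,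
`‖u − v‖₂ ≤ 2 ‖ [u,1]/‖[u,1]‖₂ − [v,1]/‖[v,1]‖₂ ‖₂`, where `[x,1] ∈ ℝ^{N+1}`
appends the entry `1` to `x`. -/
theorem dist_le_two_dist_normalized_append (N : ℕ) (u v : Fin N → ℝ)
    (hu : Real.sqrt (∑ i, u i ^ 2) ≤ 1) (hv : Real.sqrt (∑ i, v i ^ 2) ≤ 1) :
    Real.sqrt (∑ i, (u i - v i) ^ 2)
      ≤ 2 * Real.sqrt (∑ i : Fin (N + 1),
          ((Fin.snoc u (1 : ℝ) : Fin (N+1) → ℝ) i / Real.sqrt (∑ j : Fin (N + 1), (Fin.snoc u (1 : ℝ) : Fin (N+1) → ℝ) j ^ 2)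
            - (Fin.snoc v (1 : ℝ) : Fin (N+1) → ℝ) i / Real.sqrt (∑ j : Fin (N + 1), (Fin.snoc v (1 : ℝ) : Fin (N+1) → ℝ) j ^ 2)) ^ 2) := by
  set S := ∑ i, u i ^ 2 with hSdef
  set T := ∑ i, v i ^ 2 with hTdef
  set c := ∑ i, u i * v i with hcdef
  have hS0 : 0 ≤ S := Finset.sum_nonneg fun i _ => sq_nonneg _
  have hT0 : 0 ≤ T := Finset.sum_nonneg fun i _ => sq_nonneg _
  have hS1 : S ≤ 1 := by nlinarith [Real.sq_sqrt hS0, Real.sqrt_nonneg S]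
  have hT1 : T ≤ 1 := by nlinarith [Real.sq_sqrt hT0, Real.sqrt_nonneg T]
  have hcs : c ^ 2 ≤ S * T := Finset.sum_mul_sq_le_sq_mul_sq _ _ _
  have hXu : (∑ j : Fin (N + 1), (Fin.snoc u (1 : ℝ) : Fin (N+1) → ℝ) j ^ 2) = S + 1 := by
    rw [Fin.sum_univ_castSucc]; simp [hSdef]
  have hXv : (∑ j : Fin (N + 1), (Fin.snoc v (1 : ℝ) : Fin (N+1) → ℝ) j ^ 2) = T + 1 := by
    rw [Fin.sum_univ_castSucc]; simp [hTdef]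
  rw [hXu, hXv]
  set a := Real.sqrt (S + 1) with ha
  set b := Real.sqrt (T + 1) with hb
  have ha2 : a ^ 2 = S + 1 := Real.sq_sqrt (by linarith)
  have hb2 : b ^ 2 = T + 1 := Real.sq_sqrt (by linarith)
  have ha0 : 0 < a := Real.sqrt_pos.2 (by linarith)
  have hb0 : 0 < b := Real.sqrt_pos.2 (by linarith)
  have hL : (∑ i, (u i - v i) ^ 2) = S + T - 2 * c := by
    have h : ∀ i ∈ Finset.univ, (u i - v i) ^ 2 = u i ^ 2 + v i ^ 2 - 2 * (u i * v i) :=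
      fun i _ => by ring
    rw [Finset.sum_congr rfl h, Finset.sum_sub_distrib, Finset.sum_add_distrib,
      ← Finset.mul_sum, ← hSdef, ← hTdef, ← hcdef]
  have hXuv : (∑ j : Fin (N + 1),
      (Fin.snoc u (1 : ℝ) : Fin (N+1) → ℝ) j * (Fin.snoc v (1 : ℝ) : Fin (N+1) → ℝ) j) = c + 1 := by
    rw [Fin.sum_univ_castSucc]; simp [hcdef]
  have hM : (∑ i : Fin (N + 1),
      ((Fin.snoc u (1 : ℝ) : Fin (N+1) → ℝ) i / a - (Fin.snoc v (1 : ℝ) : Fin (N+1) → ℝ) i / b) ^ 2)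
      = 2 - 2 * (c + 1) / (a * b) := by
    have hexp : ∀ i ∈ Finset.univ, ((Fin.snoc u (1 : ℝ) : Fin (N+1) → ℝ) i / a
        - (Fin.snoc v (1 : ℝ) : Fin (N+1) → ℝ) i / b) ^ 2
        = (Fin.snoc u (1 : ℝ) : Fin (N+1) → ℝ) i ^ 2 * (1 / a ^ 2)
          - ((Fin.snoc u (1 : ℝ) : Fin (N+1) → ℝ) i * (Fin.snoc v (1 : ℝ) : Fin (N+1) → ℝ) i)
              * (2 / (a * b))
          + (Fin.snoc v (1 : ℝ) : Fin (N+1) → ℝ) i ^ 2 * (1 / b ^ 2) := by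
      intro i _
      field_simp
      ring
    rw [Finset.sum_congr rfl hexp, Finset.sum_add_distrib, Finset.sum_sub_distrib,
      ← Finset.sum_mul, ← Finset.sum_mul, ← Finset.sum_mul, hXu, hXv, hXuv, ← ha2, ← hb2]
    field_simp
    ring
  rw [hL, hM]
  have hkey := key_scalar_ineq S T c hS0 hT0 hS1 hT1 hcs
  rw [← ha, ← hb] at hkey
  have habpos : 0 < a * b := mul_pos ha0 hb0
  have hmain : S + T - 2 * c ≤ 4 * (2 - 2 * (c + 1) / (a * b)) := by
    have h2 : 2 * (c + 1) / (a * b) ≤ (8 - S - T + 2 * c) / 4 := by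
      rw [div_le_div_iff₀ habpos (by norm_num)]
      linarith
    linarith [h2]
  calc Real.sqrt (S + T - 2 * c) ≤ Real.sqrt (4 * (2 - 2 * (c + 1) / (a * b))) :=
        Real.sqrt_le_sqrt hmain
    _ = 2 * Real.sqrt (2 - 2 * (c + 1) / (a * b)) := by
        rw [show (4 : ℝ) * (2 - 2 * (c + 1) / (a * b)) = 2^2 * (2 - 2 * (c + 1) / (a * b)) by norm_num,
          Real.sqrt_mul (by positivity), Real.sqrt_sq (by norm_num)]
end

section
/- Let A be an m×N matrix satisfying the RIP₁,₂(t, δ) property for some t ≥ 1 and 0 ≤ δ ≤ 1. Then for every z ∈ ℝ^N, ‖Az‖₁ ≤ (1+δ)(‖z‖₂ + ‖z‖₁/√t). -/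
open Finset Matrix

/-!
Split `z = x + y`, where `x` keeps the `t` entries of largest modulus. The RIP bound controls
`‖Ax‖₁` by `(1+δ)‖x‖₂`, and every entry of `y` is at most the average `‖x‖₁/t`, so that
`√t ‖y‖_∞ ≤ ‖x‖₁/√t`. Hence it suffices to show `‖Ay‖₁ ≤ (1+δ)(√t ‖y‖_∞ + ‖y‖₁/√t)`, and this
sup-norm variant follows from the same splitting by induction on the size of the support, since
`‖x‖₂ ≤ √t ‖z‖_∞` and the `ℓ₁` masses of the successive blocks add up to `‖z‖₁`.
-/

theorem Finset.exists_subset_card_eq_forall_le {α β : Type*} [DecidableEq α] [LinearOrder β]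
    (f : α → β) : ∀ {k : ℕ} {s : Finset α}, k ≤ #s →
      ∃ T ⊆ s, #T = k ∧ ∀ i ∈ s \ T, ∀ j ∈ T, f i ≤ f j
  | 0, s, _ => ⟨∅, empty_subset s, card_empty, by simp⟩
  | k + 1, s, hk => by
    obtain ⟨j, hj, hmax⟩ := s.exists_max_image f (card_pos.mp (by omega))
    obtain ⟨T, hTs, hTk, hT⟩ :=
      exists_subset_card_eq_forall_le f (k := k) (s := s.erase j)
        (by rw [card_erase_of_mem hj]; omega)
    have hjT : j ∉ T := fun h => by simpa using hTs h
    refine ⟨insert j T, insert_subset hj (hTs.trans (erase_subset j s)),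
      by rw [card_insert_of_notMem hjT, hTk], fun i hi l hl => ?_⟩
    rw [mem_sdiff, mem_insert, not_or] at hi
    rcases mem_insert.mp hl with rfl | hl
    · exact hmax i hi.1
    · exact hT i (mem_sdiff.mpr ⟨mem_erase.mpr ⟨hi.2.1, hi.1⟩, hi.2.2⟩) l hl

section

variable {ι κ : Type*} [Fintype ι] [Fintype κ]

theorem sqrt_sum_sq_le_sqrt_card_mul_norm (z : ι → ℝ) (T : Finset ι) :
    √(∑ i ∈ T, z i ^ 2) ≤ √(#T : ℝ) * ‖z‖ := by
  have hsum : ∑ i ∈ T, z i ^ 2 ≤ #T * ‖z‖ ^ 2 := by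
    simpa using sum_le_card_nsmul T (fun i => z i ^ 2) (‖z‖ ^ 2) fun i _ => by
      simpa using pow_le_pow_left₀ (norm_nonneg _) (norm_le_pi_norm z i) 2
  calc √(∑ i ∈ T, z i ^ 2) ≤ √(#T * ‖z‖ ^ 2) := Real.sqrt_le_sqrt hsum
    _ = √(#T : ℝ) * ‖z‖ := by rw [Real.sqrt_mul (Nat.cast_nonneg _), Real.sqrt_sq (norm_nonneg z)]

theorem exists_subset_support_card_eq_min [DecidableEq ι] (t : ℕ) (z : ι → ℝ) :
    ∃ T ⊆ ({i | z i ≠ 0} : Finset ι), #T = min t #{i | z i ≠ 0} ∧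
      ∀ i ∉ T, t * |z i| ≤ ∑ j ∈ T, |z j| := by
  set s : Finset ι := {i | z i ≠ 0}
  obtain ⟨T, hTs, hTcard, hT⟩ := s.exists_subset_card_eq_forall_le (|z ·|) (min_le_right t #s)
  refine ⟨T, hTs, hTcard, fun i hiT => ?_⟩
  by_cases hi : z i = 0
  · simpa [hi] using sum_nonneg fun j _ => abs_nonneg (z j)
  have his : i ∈ s := by simpa [s] using hi
  have hTt : #T = t := by
    have : #T < #s := card_lt_card ⟨hTs, fun h => hiT (h his)⟩
    omega
  calc (t : ℝ) * |z i| = #T • |z i| := by rw [hTt, nsmul_eq_mul]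
    _ ≤ ∑ j ∈ T, |z j| :=
      card_nsmul_le_sum T _ _ fun j hj => hT i (mem_sdiff.mpr ⟨his, hiT⟩) j hj

/-- The upper half of `RIP₁,₂(t, δ)`, with `C = 1 + δ`. -/
def UpperRIP12 (A : Matrix κ ι ℝ) (t : ℕ) (C : ℝ) : Prop :=
  ∀ x : ι → ℝ, #{i | x i ≠ 0} ≤ t → ∑ k, |(A *ᵥ x) k| ≤ C * √(∑ i, x i ^ 2)

theorem sum_abs_mulVec_le_of_dominated {A : Matrix κ ι ℝ} {t : ℕ} {C : ℝ}
    (hA : UpperRIP12 A t C) (hC : 0 ≤ C) (ht : 0 < t) {z : ι → ℝ} {T : Finset ι} (hT : #T ≤ t)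
    (hdom : ∀ i ∉ T, t * |z i| ≤ ∑ j ∈ T, |z j|)
    (hrest : ∑ k, |(A *ᵥ Set.indicator (↑T)ᶜ z) k| ≤
      C * (√t * ‖Set.indicator (↑T)ᶜ z‖ + (∑ i, |Set.indicator (↑T)ᶜ z i|) / √t)) :
    ∑ k, |(A *ᵥ z) k| ≤ C * (√(∑ i ∈ T, z i ^ 2) + (∑ i, |z i|) / √t) := by
  set x := Set.indicator (↑T) z
  set y := Set.indicator (↑T)ᶜ z
  set L := ∑ j ∈ T, |z j|
  have hAx : ∑ k, |(A *ᵥ x) k| ≤ C * √(∑ i ∈ T, z i ^ 2) := by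
    have hsupp : #{i | x i ≠ 0} ≤ t :=
      (card_le_card fun i hi => by by_contra h; simp [x, h] at hi).trans hT
    have hsq : ∑ i, x i ^ 2 = ∑ i ∈ T, z i ^ 2 :=
      sum_indicator_subset_of_eq_zero z (fun _ a => a ^ 2) (subset_univ T) fun _ =>
        zero_pow two_ne_zero
    exact hsq ▸ hA x hsupp
  have hy1 : ∑ i, |y i| = ∑ i, |z i| - L := by
    have hx1 : ∑ i, |x i| = L :=
      sum_indicator_subset_of_eq_zero z (fun _ a => |a|) (subset_univ T) fun _ => abs_zero
    have hsplit : ∀ i, |z i| = |x i| + |y i| := fun i => by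
      by_cases hi : i ∈ T <;> simp [x, y, hi]
    rw [sum_congr rfl fun i _ => hsplit i, sum_add_distrib, hx1]
    ring
  have hy_norm : √t * ‖y‖ ≤ L / √t := by
    have ht' : (0 : ℝ) < t := Nat.cast_pos.mpr ht
    have hy : ‖y‖ ≤ L / t := (pi_norm_le_iff_of_nonneg (by positivity)).mpr fun i => by
      by_cases hi : i ∈ T
      · simpa [y, hi] using div_nonneg (sum_nonneg fun j _ => abs_nonneg (z j)) ht'.le
      · simpa [y, hi, le_div_iff₀ ht', mul_comm] using hdom i hi
    calc √t * ‖y‖ ≤ √t * (L / t) := by gcongr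
      _ = L / √t := by
        have := Real.sqrt_pos.mpr ht'
        field_simp
        rw [Real.sq_sqrt ht'.le, mul_comm]
  have htri : ∑ k, |(A *ᵥ z) k| ≤ ∑ k, |(A *ᵥ x) k| + ∑ k, |(A *ᵥ y) k| := by
    rw [← Set.indicator_self_add_compl (↑T) z, mulVec_add, ← sum_add_distrib]
    exact sum_le_sum fun k _ => abs_add_le _ _
  calc ∑ k, |(A *ᵥ z) k|
      ≤ C * √(∑ i ∈ T, z i ^ 2) + C * (L / √t + (∑ i, |z i| - L) / √t) := by
        rw [← hy1]; grw [htri, hAx, hrest, hy_norm]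
    _ = C * (√(∑ i ∈ T, z i ^ 2) + (∑ i, |z i|) / √t) := by ring

theorem sum_abs_mulVec_le_sqrt_mul_norm_add {A : Matrix κ ι ℝ} {t : ℕ} {C : ℝ}
    (hA : UpperRIP12 A t C) (hC : 0 ≤ C) (ht : 0 < t) (z : ι → ℝ) :
    ∑ k, |(A *ᵥ z) k| ≤ C * (√t * ‖z‖ + (∑ i, |z i|) / √t) := by
  classical
  induction hn : #{i | z i ≠ 0} using Nat.strong_induction_on generalizing z with
  | _ n ih =>
  rcases eq_or_ne z 0 with rfl | hz
  · simp only [mulVec_zero, Pi.zero_apply, abs_zero, sum_const_zero, norm_zero]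
    positivity
  obtain ⟨T, hTs, hTcard, hdom⟩ := exists_subset_support_card_eq_min t z
  have hsupp_rest : #{i | Set.indicator (↑T)ᶜ z i ≠ 0} < n := by
    have hrest : univ.filter (Set.indicator (↑T)ᶜ z · ≠ 0) = univ.filter (z · ≠ 0) \ T := by
      ext i
      by_cases hi : i ∈ T <;> simp [hi]
    obtain ⟨i, hi⟩ := Function.ne_iff.mp hz
    have hpos : 0 < n := hn ▸ card_pos.mpr ⟨i, by simpa using hi⟩
    rw [hrest, card_sdiff_of_subset hTs, hTcard, hn]
    omega
  calc ∑ k, |(A *ᵥ z) k|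
      ≤ C * (√(∑ i ∈ T, z i ^ 2) + (∑ i, |z i|) / √t) :=
        sum_abs_mulVec_le_of_dominated hA hC ht (hTcard ▸ min_le_left _ _) hdom
          (ih _ hsupp_rest _ rfl)
    _ ≤ C * (√t * ‖z‖ + (∑ i, |z i|) / √t) := by
        grw [sqrt_sum_sq_le_sqrt_card_mul_norm, hTcard, min_le_left]

end

theorem rip12_l1_upper_general (m N t : ℕ) (ht : 1 ≤ t) (δ : ℝ) (hδ0 : 0 ≤ δ)
    (A : Matrix (Fin m) (Fin N) ℝ)
    (hRIP : ∀ x : Fin N → ℝ, (Finset.univ.filter fun i => x i ≠ 0).card ≤ t →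
      (1 - δ) * Real.sqrt (∑ i, x i ^ 2) ≤ ∑ i, |(A *ᵥ x) i| ∧
      ∑ i, |(A *ᵥ x) i| ≤ (1 + δ) * Real.sqrt (∑ i, x i ^ 2)) :
    ∀ z : Fin N → ℝ,
      ∑ i, |(A *ᵥ z) i|
        ≤ (1 + δ) * (Real.sqrt (∑ i, z i ^ 2) + (∑ i, |z i|) / Real.sqrt t) := by
  intro z
  have hA : UpperRIP12 A t (1 + δ) := fun x hx => (hRIP x hx).2
  have hC : 0 ≤ 1 + δ := by linarith
  obtain ⟨T, -, hTcard, hdom⟩ := exists_subset_support_card_eq_min t z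
  calc ∑ k, |(A *ᵥ z) k|
      ≤ (1 + δ) * (√(∑ i ∈ T, z i ^ 2) + (∑ i, |z i|) / √t) :=
        sum_abs_mulVec_le_of_dominated hA hC ht (hTcard ▸ min_le_left _ _) hdom
          (sum_abs_mulVec_le_sqrt_mul_norm_add hA hC ht _)
    _ ≤ (1 + δ) * (√(∑ i, z i ^ 2) + (∑ i, |z i|) / √t) := by
        grw [sum_le_sum_of_subset_of_nonneg (subset_univ T) fun i _ _ => sq_nonneg (z i)]

/-- If `A` satisfies `RIP₁,₂(t, δ)` (i.e. `(1−δ)‖x‖₂ ≤ ‖Ax‖₁ ≤ (1+δ)‖x‖₂` for all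
`t`-sparse `x`) with `t ≥ 1` and `0 ≤ δ ≤ 1`, then for every `z`,
`‖Az‖₁ ≤ (1+δ)(‖z‖₂ + ‖z‖₁/√t)`. -/
theorem rip12_l1_upper (m N t : ℕ) (ht : 1 ≤ t) (δ : ℝ) (hδ0 : 0 ≤ δ) (hδ1 : δ ≤ 1)
    (A : Matrix (Fin m) (Fin N) ℝ)
    (hRIP : ∀ x : Fin N → ℝ, (Finset.univ.filter fun i => x i ≠ 0).card ≤ t →
      (1 - δ) * Real.sqrt (∑ i, x i ^ 2) ≤ ∑ i, |(A *ᵥ x) i| ∧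
      ∑ i, |(A *ᵥ x) i| ≤ (1 + δ) * Real.sqrt (∑ i, x i ^ 2)) :
    ∀ z : Fin N → ℝ,
      ∑ i, |(A *ᵥ z) i|
        ≤ (1 + δ) * (Real.sqrt (∑ i, z i ^ 2) + (∑ i, |z i|) / Real.sqrt t) :=
  rip12_l1_upper_general m N t ht δ hδ0 A hRIP
end

section
/- Let ε ∈ {−1,+1}^N be any sign vector, 0 < λ < 1, and define x_{+λ} = (1+λ²)^{−1/2}(1, λ, 0, …, 0) and x_{−λ} = (1+λ²)^{−1/2}(1, −λ, 0, …, 0) in ℝ^N. Then for every row i of the circulant matrix Γ_ε, sign(⟨(Γ_ε)_i, x_{+λ}⟩) = sign(⟨(Γ_ε)_i, x_{−λ}⟩); that is, x_{+λ} and x_{−λ} produce identical one-bit measurements under any circulant matrix with ±1 entries. -/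
open Finset Matrix

lemma sum_two_aux (n : ℕ) (ε : Fin (n + 2) → ℝ) (i : Fin (n + 2)) (c t : ℝ) :
    (∑ j, ε (i - j) * (c * (if j = 0 then 1 else if j = 1 then t else 0)))
      = c * ε i + c * t * ε (i - 1) := by
  rw [Fintype.sum_eq_add (0 : Fin (n + 2)) 1 (by simp [Fin.ext_iff])
    (f := fun j => ε (i - j) * (c * (if j = 0 then 1 else if j = 1 then t else 0)))]
  · simp; ring
  · intro j h
    simp [h.1, h.2]

lemma sign_aux (a b c t : ℝ) (hc : 0 < c) (ha : a = 1 ∨ a = -1) (hb : b = 1 ∨ b = -1)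
    (ht : |t| < 1) : Real.sign (c * a + c * t * b) = Real.sign a := by
  have h1 : -1 < t := by linarith [neg_abs_le t]
  have h2 : t < 1 := lt_of_le_of_lt (le_abs_self t) ht
  rcases ha with ha | ha <;> rcases hb with hb | hb <;> subst ha <;> subst hb
  · rw [Real.sign_of_pos (by nlinarith), Real.sign_one]
  · rw [Real.sign_of_pos (by nlinarith), Real.sign_one]
  · rw [Real.sign_of_neg (by nlinarith)]
    simp [Real.sign_of_neg]
  · rw [Real.sign_of_neg (by nlinarith)]
    simp [Real.sign_of_neg]

/-- For a sign vector `ε ∈ {−1,1}^N` (here `N = n+2 ≥ 2`) and `0 < λ < 1`, the 2-sparse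
unit vectors `x_{±λ} = (1+λ²)^{−1/2}(1, ±λ, 0, …, 0)` produce identical one-bit
measurements under the circulant matrix `Γ_ε`: every row `(Γ_ε)_i` satisfies
`sign(⟨(Γ_ε)_i, x_{+λ}⟩) = sign(⟨(Γ_ε)_i, x_{−λ}⟩)`. -/
theorem bernoulli_circulant_sign_collision (n : ℕ) (ε : Fin (n + 2) → ℝ)
    (hε : ∀ i, ε i = 1 ∨ ε i = -1) (lam : ℝ) (hlam0 : 0 < lam) (hlam1 : lam < 1) :
    ∀ i : Fin (n + 2),
      Real.sign (∑ j, ε (i - j) *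
          ((1 + lam ^ 2) ^ (-(1:ℝ)/2) * (if j = 0 then 1 else if j = 1 then lam else 0)))
        = Real.sign (∑ j, ε (i - j) *
          ((1 + lam ^ 2) ^ (-(1:ℝ)/2) * (if j = 0 then 1 else if j = 1 then -lam else 0))) := by
  intro i
  have hc : 0 < (1 + lam ^ 2 : ℝ) ^ (-(1:ℝ)/2) :=
    Real.rpow_pos_of_pos (by positivity) _
  have ht : |lam| < 1 := by rwa [abs_of_pos hlam0]
  have ht' : |(-lam)| < 1 := by rwa [abs_neg]
  rw [sum_two_aux, sum_two_aux,
    sign_aux _ (ε (i - 1)) _ lam hc (hε i) (hε (i - 1)) ht,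
    sign_aux _ (ε (i - 1)) _ (-lam) hc (hε i) (hε (i - 1)) ht']
end

section
/- No matrix of the form A = α R_I Γ_ε, with ε ∈ {−1,1}^N, α > 0 a scaling, and R_I restriction to a subset I ⊆ [N], can satisfy RIP₁,₂(4, δ) with δ < 1/40, provided the hard-thresholding recovery guarantee holds: if A satisfies RIP₁,₂(2s, δ) then every s-sparse unit vector x satisfies ‖x − H_s(A* sign(Ax))‖₂ ≤ 2√(5δ). -/
/-!
If every entry of column `j` of `A` is dominated in absolute value by the entry of column `i`
in the same row, then for `|b| < |a|` the vectors `a e_i + b e_j` and `a e_i - b e_j` have the same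
one-bit measurements `sign (A x)`. Any decoder returns the same vector for both, so its accuracy
`r` satisfies `2|b| ≤ 2r`; normalising and letting `|b| → 1/√2` gives `√2 ≤ 2r`. In a circulant
Bernoulli matrix all entries have absolute value `|α|`, and the hard-thresholding guarantee
`r = 2√(5δ)` then forces `δ ≥ 1/40`.
-/

open Finset Matrix

theorem Real.sign_add_of_abs_lt {x y : ℝ} (h : |y| < |x|) : Real.sign (x + y) = Real.sign x := by
  obtain ⟨hy₁, hy₂⟩ := abs_lt.1 h
  rcases lt_trichotomy x 0 with hx | hx | hx
  · rw [abs_of_neg hx] at hy₂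
    rw [Real.sign_of_neg hx, Real.sign_of_neg (by linarith)]
  · simp [hx] at h
    linarith [abs_nonneg y]
  · rw [abs_of_pos hx] at hy₁
    rw [Real.sign_of_pos hx, Real.sign_of_pos (by linarith)]

theorem EuclideanSpace.dist_toLp {κ : Type*} [Fintype κ] (x y : κ → ℝ) :
    dist (WithLp.toLp 2 x : EuclideanSpace ℝ κ) (WithLp.toLp 2 y) = √(∑ k, (x k - y k) ^ 2) := by
  simp [EuclideanSpace.dist_eq, Real.dist_eq, sq_abs]

section TwoSparse

variable {κ : Type*} [Fintype κ] [DecidableEq κ] {i j : κ}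

theorem card_filter_single_add_single_ne_zero (a b : ℝ) :
    #{k | (Pi.single i a + Pi.single j b : κ → ℝ) k ≠ 0} ≤ 2 := by
  refine (card_le_card (t := {i, j}) fun k hk => ?_).trans card_le_two
  by_contra hne
  simp_all [Pi.single_apply]

theorem sum_sq_single_add_single (hij : i ≠ j) (a b : ℝ) :
    ∑ k, (Pi.single i a + Pi.single j b : κ → ℝ) k ^ 2 = a ^ 2 + b ^ 2 := by
  rw [← sum_subset (subset_univ {i, j}) fun k _ hk => ?_, sum_pair hij]
  · simp [hij, hij.symm]
  · simp_all

theorem sign_mulVec_single_add_single {ι : Type*} (A : Matrix ι κ ℝ)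
    (hcol : ∀ k, |A k j| ≤ |A k i|) {a b : ℝ} (hab : |b| < |a|) (k : ι) :
    Real.sign ((A *ᵥ (Pi.single i a + Pi.single j b)) k) = Real.sign (A k i * a) := by
  simp only [mulVec_add, mulVec_single, Pi.add_apply, Pi.smul_apply, col_apply, op_smul_eq_mul]
  by_cases hk : A k i = 0
  · have : A k j = 0 := abs_nonpos_iff.1 (by simpa [hk] using hcol k)
    simp [hk, this]
  · refine Real.sign_add_of_abs_lt ?_
    rw [abs_mul, abs_mul]
    calc |A k j| * |b| ≤ |A k i| * |b| := mul_le_mul_of_nonneg_right (hcol k) (abs_nonneg b)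
      _ < |A k i| * |a| := mul_lt_mul_of_pos_left hab (abs_pos.2 hk)

end TwoSparse

def RecoversTwoSparseFromSigns {ι κ : Type*} [Fintype κ] (A : Matrix ι κ ℝ)
    (G : (ι → ℝ) → κ → ℝ) (r : ℝ) : Prop :=
  ∀ x : κ → ℝ, #{k | x k ≠ 0} ≤ 2 → √(∑ k, x k ^ 2) = 1 →
    √(∑ k, (x k - G (fun l => Real.sign ((A *ᵥ x) l)) k) ^ 2) ≤ r

namespace RecoversTwoSparseFromSigns

variable {ι κ : Type*} [Fintype κ] [DecidableEq κ] {A : Matrix ι κ ℝ} {G : (ι → ℝ) → κ → ℝ}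
  {r : ℝ} {i j : κ}

theorem abs_le (hG : RecoversTwoSparseFromSigns A G r) (hij : i ≠ j)
    (hcol : ∀ k, |A k j| ≤ |A k i|) {a b : ℝ} (hab : |b| < |a|) (hunit : a ^ 2 + b ^ 2 = 1) :
    |b| ≤ r := by
  set x : ℝ → EuclideanSpace ℝ κ := fun s => WithLp.toLp 2 (Pi.single i a + Pi.single j s)
  set g : EuclideanSpace ℝ κ := WithLp.toLp 2 (G fun l => Real.sign (A l i * a))
  have hdist : ∀ s, |s| = |b| → dist (x s) g ≤ r := by
    intro s hs
    have hsign : (fun l => Real.sign ((A *ᵥ (Pi.single i a + Pi.single j s)) l)) =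
        fun l => Real.sign (A l i * a) :=
      funext (sign_mulVec_single_add_single A hcol (hs ▸ hab))
    rw [EuclideanSpace.dist_toLp, ← hsign]
    refine hG _ (card_filter_single_add_single_ne_zero a s) ?_
    rw [sum_sq_single_add_single hij, ← sq_abs s, hs, sq_abs, hunit, Real.sqrt_one]
  have hdiff : dist (x b) (x (-b)) = 2 * |b| := by
    have hsub : ∀ k, (Pi.single i a + Pi.single j b : κ → ℝ) k -
        (Pi.single i a + Pi.single j (-b) : κ → ℝ) k =
          (Pi.single i 0 + Pi.single j (2 * b) : κ → ℝ) k := by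
      intro k
      simp only [Pi.add_apply, Pi.single_apply]
      split_ifs <;> ring
    rw [EuclideanSpace.dist_toLp, sum_congr rfl fun k _ => by rw [hsub k],
      sum_sq_single_add_single hij, zero_pow two_ne_zero, zero_add, Real.sqrt_sq_eq_abs, abs_mul,
      abs_two]
  linarith [dist_triangle_right (x b) (x (-b)) g, hdist b rfl, hdist (-b) (abs_neg b)]

theorem sqrt_two_le (hG : RecoversTwoSparseFromSigns A G r) (hij : i ≠ j)
    (hcol : ∀ k, |A k j| ≤ |A k i|) : √2 ≤ 2 * r := by
  suffices √2 / 2 ≤ r by linarith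
  refine le_of_forall_lt_imp_le_of_dense fun b hb => (le_max_left b 0).trans ?_
  set c := max b 0
  have hc : 0 ≤ c := le_max_right b 0
  have hc2 : c ^ 2 < 1 / 2 := by
    have : c < √2 / 2 := max_lt hb (by positivity)
    nlinarith [Real.sq_sqrt (zero_le_two : (0 : ℝ) ≤ 2)]
  have hunit : √(1 - c ^ 2) ^ 2 + c ^ 2 = 1 := by
    rw [Real.sq_sqrt (by linarith)]
    ring
  have hlt : |c| < |√(1 - c ^ 2)| := by
    rw [abs_of_nonneg hc, abs_of_nonneg (Real.sqrt_nonneg _), Real.lt_sqrt hc]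
    linarith
  simpa [abs_of_nonneg hc] using hG.abs_le hij hcol hlt hunit

end RecoversTwoSparseFromSigns

theorem bernoulli_circulant_no_rip_general (n m : ℕ) (ε : Fin (n + 2) → ℝ)
    (hε : ∀ i, ε i = 1 ∨ ε i = -1) (α : ℝ)
    (I : Fin m → Fin (n + 2)) (δ : ℝ) (hδ : δ < 1 / 40)
    (A : Matrix (Fin m) (Fin (n + 2)) ℝ)
    (hA : A = α • Matrix.of fun i j => ε (I i - j))
    (H : (Fin (n + 2) → ℝ) → (Fin (n + 2) → ℝ))
    (hHT : (∀ x : Fin (n + 2) → ℝ,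
        (Finset.univ.filter fun i => x i ≠ 0).card ≤ 4 →
        (1 - δ) * Real.sqrt (∑ i, x i ^ 2) ≤ ∑ i, |(A *ᵥ x) i| ∧
        ∑ i, |(A *ᵥ x) i| ≤ (1 + δ) * Real.sqrt (∑ i, x i ^ 2)) →
      ∀ x : Fin (n + 2) → ℝ,
        (Finset.univ.filter fun i => x i ≠ 0).card ≤ 2 →
        Real.sqrt (∑ i, x i ^ 2) = 1 →
        Real.sqrt (∑ i,
            (x i - H (Aᵀ *ᵥ fun k => Real.sign ((A *ᵥ x) k)) i) ^ 2)
          ≤ 2 * Real.sqrt (5 * δ)) :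
    ¬ (∀ x : Fin (n + 2) → ℝ,
        (Finset.univ.filter fun i => x i ≠ 0).card ≤ 4 →
        (1 - δ) * Real.sqrt (∑ i, x i ^ 2) ≤ ∑ i, |(A *ᵥ x) i| ∧
        ∑ i, |(A *ᵥ x) i| ≤ (1 + δ) * Real.sqrt (∑ i, x i ^ 2)) := by
  intro hRIP
  have hrec : RecoversTwoSparseFromSigns A (fun y => H (Aᵀ *ᵥ y)) (2 * √(5 * δ)) := hHT hRIP
  have habs : ∀ i, |ε i| = 1 := fun i => by rcases hε i with h | h <;> simp [h]
  have hcol : ∀ k, |A k 1| ≤ |A k 0| := fun k => by simp [hA, abs_mul, habs]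
  have hsqrt : √(5 * δ) < √2 / 4 := by
    rw [Real.sqrt_lt' (by positivity), div_pow, Real.sq_sqrt zero_le_two]
    linarith
  linarith [hrec.sqrt_two_le (by simp) hcol]

/-- No subsampled and rescaled Bernoulli circulant matrix `A = α R_I Γ_ε` can satisfy
`RIP₁,₂(4, δ)` with `δ < 1/40`, given the hard-thresholding recovery guarantee: if `A`
satisfies `RIP₁,₂(4, δ)` then every `2`-sparse unit vector `x` satisfies
`‖x − H₂(A* sign(Ax))‖₂ ≤ 2√(5δ)` (the reconstruction map `H` being the
hard-thresholding operator `H₂`). -/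
theorem bernoulli_circulant_no_rip (n m : ℕ) (ε : Fin (n + 2) → ℝ)
    (hε : ∀ i, ε i = 1 ∨ ε i = -1) (α : ℝ) (hα : 0 < α)
    (I : Fin m → Fin (n + 2)) (δ : ℝ) (hδ0 : 0 ≤ δ) (hδ : δ < 1 / 40)
    (A : Matrix (Fin m) (Fin (n + 2)) ℝ)
    (hA : A = α • Matrix.of fun i j => ε (I i - j))
    (H : (Fin (n + 2) → ℝ) → (Fin (n + 2) → ℝ))
    (hHT : (∀ x : Fin (n + 2) → ℝ,
        (Finset.univ.filter fun i => x i ≠ 0).card ≤ 4 →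
        (1 - δ) * Real.sqrt (∑ i, x i ^ 2) ≤ ∑ i, |(A *ᵥ x) i| ∧
        ∑ i, |(A *ᵥ x) i| ≤ (1 + δ) * Real.sqrt (∑ i, x i ^ 2)) →
      ∀ x : Fin (n + 2) → ℝ,
        (Finset.univ.filter fun i => x i ≠ 0).card ≤ 2 →
        Real.sqrt (∑ i, x i ^ 2) = 1 →
        Real.sqrt (∑ i,
            (x i - H (Aᵀ *ᵥ fun k => Real.sign ((A *ᵥ x) k)) i) ^ 2)
          ≤ 2 * Real.sqrt (5 * δ)) :
    ¬ (∀ x : Fin (n + 2) → ℝ,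
        (Finset.univ.filter fun i => x i ≠ 0).card ≤ 4 →
        (1 - δ) * Real.sqrt (∑ i, x i ^ 2) ≤ ∑ i, |(A *ᵥ x) i| ∧
        ∑ i, |(A *ᵥ x) i| ≤ (1 + δ) * Real.sqrt (∑ i, x i ^ 2)) :=
  bernoulli_circulant_no_rip_general n m ε hε α I δ hδ A hA H hHT
end

section
/- Let [y_{[N]}, y_{N+1}] = y ∈ ℝ^{N+1} with ‖y‖₁ ≤ √s and ‖y‖₂ = 1, let g, h ∈ ℝ^N, and let [Γ_g h] be the N×(N+1) matrix obtained by appending column h to the circulant matrix Γ_g. Then [Γ_g h] y = [Γ_{y_{[N]}} y_{N+1} Id_N][g, h], and for every z ∈ ℝ^N with ‖z‖_∞ ≤ 1 one has ‖[Γ_{y_{[N]}} y_{N+1} Id_N]* z‖₂² ≤ sN. -/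
open Finset Matrix

/-- For `y = [y_{[N]}, y_{N+1}] ∈ ℝ^{N+1}` with `‖y‖₁ ≤ √s`, `‖y‖₂ = 1`:
`[Γ_g h] y = [Γ_{y_{[N]}} y_{N+1} Id_N][g, h]`, and for every `z` with `‖z‖∞ ≤ 1`,
`‖[Γ_{y_{[N]}} y_{N+1} Id_N]* z‖₂² ≤ sN`. -/
theorem extended_circulant_identity_and_bound (N : ℕ) (s : ℝ) (hs : 1 ≤ s)
    (y : Fin (N + 1) → ℝ)
    (hy1 : (∑ i, |y i|) ≤ Real.sqrt s)
    (hy2 : Real.sqrt (∑ i, y i ^ 2) = 1)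
    (g h : Fin N → ℝ) :
    ((Matrix.of fun (i : Fin N) (j : Fin (N + 1)) =>
        (Fin.snoc (fun k : Fin N => g (i - k)) (h i) : Fin (N + 1) → ℝ) j) *ᵥ y
      = (Matrix.of fun (i : Fin N) (j : Fin N ⊕ Fin N) =>
          Sum.elim (fun k : Fin N => y (Fin.castSucc (i - k)))
            (fun k : Fin N => y (Fin.last N) * (if i = k then 1 else 0)) j)
        *ᵥ Sum.elim g h) ∧
    ∀ z : Fin N → ℝ, (∀ k, |z k| ≤ 1) →
      (∑ j : Fin N ⊕ Fin N,
        ((Matrix.of fun (i : Fin N) (j : Fin N ⊕ Fin N) =>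
          Sum.elim (fun k : Fin N => y (Fin.castSucc (i - k)))
            (fun k : Fin N => y (Fin.last N) * (if i = k then 1 else 0)) j)ᵀ *ᵥ z) j ^ 2)
        ≤ s * N := by
  have hs0 : (0:ℝ) ≤ s := le_trans zero_le_one hs
  -- notation
  set b := y (Fin.last N) with hb
  have key : (∑ i : Fin N, |y (Fin.castSucc i)|) + |b| ≤ Real.sqrt s := by
    rw [hb, ← Fin.sum_univ_castSucc (f := fun i => |y i|)]; exact hy1
  have ha0 : (0:ℝ) ≤ ∑ i : Fin N, |y (Fin.castSucc i)| :=
    Finset.sum_nonneg fun i _ => abs_nonneg _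
  constructor
  · funext i
    have : NeZero N := ⟨(Fin.pos i).ne'⟩
    simp only [mulVec, dotProduct, Matrix.of_apply]
    rw [Fin.sum_univ_castSucc, Fintype.sum_sum_type]
    simp only [Fin.snoc_castSucc, Fin.snoc_last, Sum.elim_inl, Sum.elim_inr]
    have h1 : ∑ k : Fin N, g (i - k) * y (Fin.castSucc k)
        = ∑ k : Fin N, y (Fin.castSucc (i - k)) * g k := by
      rw [← Equiv.sum_comp (Equiv.subLeft i) (fun k => y (Fin.castSucc (i - k)) * g k)]
      simp [Equiv.subLeft, mul_comm]
    have h2 : ∑ k : Fin N, b * (if i = k then 1 else 0) * h k = b * h i := by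
      simp [mul_ite, mul_comm]
    rw [h1, h2]; ring
  · intro z hz
    rw [Fintype.sum_sum_type]
    have colbound : ∀ k : Fin N,
        ((Matrix.of fun (i : Fin N) (j : Fin N ⊕ Fin N) =>
          Sum.elim (fun k : Fin N => y (Fin.castSucc (i - k)))
            (fun k : Fin N => b * (if i = k then 1 else 0)) j)ᵀ *ᵥ z) (Sum.inl k) ^ 2
          ≤ (∑ i : Fin N, |y (Fin.castSucc i)|) ^ 2 := by
      intro k
      simp only [mulVec, dotProduct, transpose_apply, Matrix.of_apply, Sum.elim_inl]
      have habs : |∑ i : Fin N, y (Fin.castSucc (i - k)) * z i|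
          ≤ ∑ i : Fin N, |y (Fin.castSucc i)| := by
        refine le_trans (Finset.abs_sum_le_sum_abs _ _) ?_
        have : ∑ i : Fin N, |y (Fin.castSucc (i - k)) * z i|
            ≤ ∑ i : Fin N, |y (Fin.castSucc (i - k))| := by
          refine Finset.sum_le_sum fun i _ => ?_
          rw [abs_mul]
          exact mul_le_of_le_one_right (abs_nonneg _) (hz i)
        refine le_trans this (le_of_eq ?_)
        rcases Nat.eq_zero_or_pos N with hN | hN
        · subst hN; simp
        · have : NeZero N := ⟨hN.ne'⟩
          rw [← Equiv.sum_comp (Equiv.addRight k) (fun i => |y (Fin.castSucc (i - k))|)]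
          simp
      calc (∑ i : Fin N, y (Fin.castSucc (i - k)) * z i) ^ 2
          = |∑ i : Fin N, y (Fin.castSucc (i - k)) * z i| ^ 2 := (sq_abs _).symm
        _ ≤ (∑ i : Fin N, |y (Fin.castSucc i)|) ^ 2 :=
            pow_le_pow_left₀ (abs_nonneg _) habs 2
    have colbound2 : ∀ k : Fin N,
        ((Matrix.of fun (i : Fin N) (j : Fin N ⊕ Fin N) =>
          Sum.elim (fun k : Fin N => y (Fin.castSucc (i - k)))
            (fun k : Fin N => b * (if i = k then 1 else 0)) j)ᵀ *ᵥ z) (Sum.inr k) ^ 2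
          ≤ b ^ 2 := by
      intro k
      simp only [mulVec, dotProduct, transpose_apply, Matrix.of_apply, Sum.elim_inr]
      have : ∑ i : Fin N, b * (if i = k then 1 else 0) * z i = b * z k := by
        simp [mul_ite, mul_comm]
      rw [this, mul_pow]
      have : z k ^ 2 ≤ 1 := by
        rw [← sq_abs]; exact pow_le_one₀ (abs_nonneg _) (hz k)
      nlinarith [sq_nonneg b]
    have habs2 : (∑ i : Fin N, |y (Fin.castSucc i)|) ^ 2 + b ^ 2 ≤ s := by
      have h1 : (∑ i : Fin N, |y (Fin.castSucc i)|) ^ 2 + b ^ 2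
          ≤ ((∑ i : Fin N, |y (Fin.castSucc i)|) + |b|) ^ 2 := by
        nlinarith [abs_nonneg b, sq_abs b]
      have h2 : ((∑ i : Fin N, |y (Fin.castSucc i)|) + |b|) ^ 2 ≤ Real.sqrt s ^ 2 :=
        pow_le_pow_left₀ (by positivity) key 2
      rw [Real.sq_sqrt hs0] at h2
      linarith
    calc _ ≤ (∑ _k : Fin N, (∑ i : Fin N, |y (Fin.castSucc i)|) ^ 2)
            + ∑ _k : Fin N, b ^ 2 :=
          add_le_add (Finset.sum_le_sum fun k _ => colbound k)
            (Finset.sum_le_sum fun k _ => colbound2 k)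
      _ = N * ((∑ i : Fin N, |y (Fin.castSucc i)|) ^ 2 + b ^ 2) := by
          simp [Finset.sum_const, mul_add]
      _ ≤ N * s := by
          exact mul_le_mul_of_nonneg_left habs2 (Nat.cast_nonneg N)
      _ = s * N := mul_comm _ _
end
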